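/- Invertibility of se on normal forms: se is injective on SCL Normal Forms, i.e., for all P, Q in SNF, if se(P) = se(Q) then P and Q are syntactically identical (the paper proves this by constructing an explicit inverse g with g(se(P)) ≡ P for all P ∈ SNF). -/
import Mathlib


/-! Shared definitions for left-sequential logics (FEL and SCL),
    evaluation trees, and decompositions. -/

/-- FEL-terms over atoms `A` (`and` = full left-sequential conjunction `∧•`,
    `or` = full left-sequential disjunction `∨•`). -/
inductive FTerm (A : Type) : Type
  | atom : A → FTerm A
  | tru  : FTerm A
  | fls  : FTerm A
  | neg  : FTerm A → FTerm A
  | and  : FTerm A → FTerm A → FTerm A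
  | or   : FTerm A → FTerm A → FTerm A

/-- SCL-terms over atoms `A` (`and` = short-circuit conjunction `∧◦`,
    `or` = short-circuit disjunction `∨◦`). -/
inductive STerm (A : Type) : Type
  | atom : A → STerm A
  | tru  : STerm A
  | fls  : STerm A
  | neg  : STerm A → STerm A
  | and  : STerm A → STerm A → STerm A
  | or   : STerm A → STerm A → STerm A

/-- Evaluation trees: finite binary trees over `A` with leaves `T`, `F`. -/
inductive ETree (A : Type) : Type
  | tru  : ETree A
  | fls  : ETree A
  | node : ETree A → A → ETree A → ETree A

namespace ETree

/-- `X.subst Y Z = X[T↦Y, F↦Z]`. -/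
def subst {A : Type} : ETree A → ETree A → ETree A → ETree A
  | .tru, y, _ => y
  | .fls, _, z => z
  | .node l a r, y, z => .node (subst l y z) a (subst r y z)

def hasTru {A : Type} : ETree A → Prop
  | .tru => True
  | .fls => False
  | .node l _ r => hasTru l ∨ hasTru r

def hasFls {A : Type} : ETree A → Prop
  | .tru => False
  | .fls => True
  | .node l _ r => hasFls l ∨ hasFls r

def depth {A : Type} : ETree A → ℕ
  | .tru => 0
  | .fls => 0
  | .node l _ r => 1 + max (depth l) (depth r)

end ETree

/-- The full evaluation function `fe : FTerm → 𝒯`. -/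
def fe {A : Type} : FTerm A → ETree A
  | FTerm.tru => ETree.tru
  | FTerm.fls => ETree.fls
  | FTerm.atom a => ETree.node ETree.tru a ETree.fls
  | FTerm.neg p => (fe p).subst ETree.fls ETree.tru
  | FTerm.and p q => (fe p).subst (fe q) ((fe q).subst ETree.fls ETree.fls)
  | FTerm.or p q => (fe p).subst ((fe q).subst ETree.tru ETree.tru) (fe q)

/-- The short-circuit evaluation function `se : STerm → 𝒯`. -/
def se {A : Type} : STerm A → ETree A
  | STerm.tru => ETree.tru
  | STerm.fls => ETree.fls
  | STerm.atom a => ETree.node ETree.tru a ETree.fls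
  | STerm.neg p => (se p).subst ETree.fls ETree.tru
  | STerm.and p q => (se p).subst (se q) ETree.fls
  | STerm.or p q => (se p).subst ETree.tru (se q)

/-- Derivability from EqFFEL by equational logic. -/
inductive EqFFEL {A : Type} : FTerm A → FTerm A → Prop
  | refl (p : FTerm A) : EqFFEL p p
  | symm {p q : FTerm A} : EqFFEL p q → EqFFEL q p
  | trans {p q r : FTerm A} : EqFFEL p q → EqFFEL q r → EqFFEL p r
  | neg_congr {p q : FTerm A} : EqFFEL p q → EqFFEL (FTerm.neg p) (FTerm.neg q)
  | and_congr {p p' q q' : FTerm A} :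
      EqFFEL p p' → EqFFEL q q' → EqFFEL (FTerm.and p q) (FTerm.and p' q')
  | or_congr {p p' q q' : FTerm A} :
      EqFFEL p p' → EqFFEL q q' → EqFFEL (FTerm.or p q) (FTerm.or p' q')
  | fel1 : EqFFEL FTerm.fls (FTerm.neg FTerm.tru)
  | fel2 (x y : FTerm A) : EqFFEL (FTerm.or x y) (FTerm.neg (FTerm.and (FTerm.neg x) (FTerm.neg y)))
  | fel3 (x : FTerm A) : EqFFEL (FTerm.neg (FTerm.neg x)) x
  | fel4 (x y z : FTerm A) : EqFFEL (FTerm.and (FTerm.and x y) z) (FTerm.and x (FTerm.and y z))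
  | fel5 (x : FTerm A) : EqFFEL (FTerm.and FTerm.tru x) x
  | fel6 (x : FTerm A) : EqFFEL (FTerm.and x FTerm.tru) x
  | fel7 (x : FTerm A) : EqFFEL (FTerm.and x FTerm.fls) (FTerm.and FTerm.fls x)
  | fel8 (x : FTerm A) : EqFFEL (FTerm.and x FTerm.fls) (FTerm.and (FTerm.neg x) FTerm.fls)
  | fel9 (x y : FTerm A) :
      EqFFEL (FTerm.or (FTerm.and x FTerm.fls) y) (FTerm.and (FTerm.or x FTerm.tru) y)
  | fel10 (x y : FTerm A) :
      EqFFEL (FTerm.or x (FTerm.and y FTerm.fls)) (FTerm.and x (FTerm.or y FTerm.tru))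

/-- Derivability from EqFSCL by equational logic. -/
inductive EqFSCL {A : Type} : STerm A → STerm A → Prop
  | refl (p : STerm A) : EqFSCL p p
  | symm {p q : STerm A} : EqFSCL p q → EqFSCL q p
  | trans {p q r : STerm A} : EqFSCL p q → EqFSCL q r → EqFSCL p r
  | neg_congr {p q : STerm A} : EqFSCL p q → EqFSCL (STerm.neg p) (STerm.neg q)
  | and_congr {p p' q q' : STerm A} :
      EqFSCL p p' → EqFSCL q q' → EqFSCL (STerm.and p q) (STerm.and p' q')
  | or_congr {p p' q q' : STerm A} :
      EqFSCL p p' → EqFSCL q q' → EqFSCL (STerm.or p q) (STerm.or p' q')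
  | scl1 : EqFSCL STerm.fls (STerm.neg STerm.tru)
  | scl2 (x y : STerm A) : EqFSCL (STerm.or x y) (STerm.neg (STerm.and (STerm.neg x) (STerm.neg y)))
  | scl3 (x : STerm A) : EqFSCL (STerm.neg (STerm.neg x)) x
  | scl4 (x y z : STerm A) : EqFSCL (STerm.and (STerm.and x y) z) (STerm.and x (STerm.and y z))
  | scl5 (x : STerm A) : EqFSCL (STerm.and STerm.tru x) x
  | scl6 (x : STerm A) : EqFSCL (STerm.and x STerm.tru) x
  | scl7 (x : STerm A) : EqFSCL (STerm.and STerm.fls x) STerm.fls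
  | scl8 (x : STerm A) : EqFSCL (STerm.and x STerm.fls) (STerm.and (STerm.neg x) STerm.fls)
  | scl9 (x y : STerm A) :
      EqFSCL (STerm.or (STerm.and x STerm.fls) y) (STerm.and (STerm.or x STerm.tru) y)
  | scl10 (x y z : STerm A) :
      EqFSCL (STerm.or (STerm.and x y) (STerm.and z STerm.fls))
             (STerm.and (STerm.or x (STerm.and z STerm.fls)) (STerm.or y (STerm.and z STerm.fls)))

/-! ### FEL Normal Form grammar -/

/-- T-terms: `P^T ::= T | a ∨• P^T`. -/
inductive IsFT_T {A : Type} : FTerm A → Prop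
  | tru : IsFT_T FTerm.tru
  | or (a : A) {p : FTerm A} : IsFT_T p → IsFT_T (FTerm.or (FTerm.atom a) p)

/-- F-terms: `P^F ::= F | a ∧• P^F`. -/
inductive IsFT_F {A : Type} : FTerm A → Prop
  | fls : IsFT_F FTerm.fls
  | and (a : A) {p : FTerm A} : IsFT_F p → IsFT_F (FTerm.and (FTerm.atom a) p)

/-- ℓ-terms: `P^ℓ ::= a ∧• P^T | ¬a ∧• P^T`. -/
inductive IsFT_L {A : Type} : FTerm A → Prop
  | pos (a : A) {p : FTerm A} : IsFT_T p → IsFT_L (FTerm.and (FTerm.atom a) p)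
  | neg (a : A) {p : FTerm A} : IsFT_T p → IsFT_L (FTerm.and (FTerm.neg (FTerm.atom a)) p)

mutual
/-- `P^c ::= P^ℓ | P^* ∧• P^d`. -/
inductive IsFT_C {A : Type} : FTerm A → Prop
  | ell {p : FTerm A} : IsFT_L p → IsFT_C p
  | and {p q : FTerm A} : IsFT_Star p → IsFT_D q → IsFT_C (FTerm.and p q)
/-- `P^d ::= P^ℓ | P^* ∨• P^c`. -/
inductive IsFT_D {A : Type} : FTerm A → Prop
  | ell {p : FTerm A} : IsFT_L p → IsFT_D p
  | or {p q : FTerm A} : IsFT_Star p → IsFT_C q → IsFT_D (FTerm.or p q)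
/-- `P^* ::= P^c | P^d`. -/
inductive IsFT_Star {A : Type} : FTerm A → Prop
  | c {p : FTerm A} : IsFT_C p → IsFT_Star p
  | d {p : FTerm A} : IsFT_D p → IsFT_Star p
end

/-- FEL Normal Form: `P ::= P^T | P^F | P^T ∧• P^*`. -/
inductive IsFNF {A : Type} : FTerm A → Prop
  | t {p : FTerm A} : IsFT_T p → IsFNF p
  | f {p : FTerm A} : IsFT_F p → IsFNF p
  | ts {p q : FTerm A} : IsFT_T p → IsFT_Star q → IsFNF (FTerm.and p q)

/-! ### SCL Normal Form grammar -/

/-- T-terms: `P^T ::= T | (a ∧◦ P^T) ∨◦ P^T`. -/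
inductive IsST_T {A : Type} : STerm A → Prop
  | tru : IsST_T STerm.tru
  | or (a : A) {p q : STerm A} :
      IsST_T p → IsST_T q → IsST_T (STerm.or (STerm.and (STerm.atom a) p) q)

/-- F-terms: `P^F ::= F | (a ∨◦ P^F) ∧◦ P^F`. -/
inductive IsST_F {A : Type} : STerm A → Prop
  | fls : IsST_F STerm.fls
  | and (a : A) {p q : STerm A} :
      IsST_F p → IsST_F q → IsST_F (STerm.and (STerm.or (STerm.atom a) p) q)

/-- ℓ-terms: `P^ℓ ::= (a ∧◦ P^T) ∨◦ P^F | (¬a ∧◦ P^T) ∨◦ P^F`. -/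
inductive IsST_L {A : Type} : STerm A → Prop
  | pos (a : A) {p q : STerm A} :
      IsST_T p → IsST_F q → IsST_L (STerm.or (STerm.and (STerm.atom a) p) q)
  | neg (a : A) {p q : STerm A} :
      IsST_T p → IsST_F q → IsST_L (STerm.or (STerm.and (STerm.neg (STerm.atom a)) p) q)

mutual
/-- `P^c ::= P^ℓ | P^* ∧◦ P^d`. -/
inductive IsST_C {A : Type} : STerm A → Prop
  | ell {p : STerm A} : IsST_L p → IsST_C p
  | and {p q : STerm A} : IsST_Star p → IsST_D q → IsST_C (STerm.and p q)
/-- `P^d ::= P^ℓ | P^* ∨◦ P^c`. -/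
inductive IsST_D {A : Type} : STerm A → Prop
  | ell {p : STerm A} : IsST_L p → IsST_D p
  | or {p q : STerm A} : IsST_Star p → IsST_C q → IsST_D (STerm.or p q)
/-- `P^* ::= P^c | P^d`. -/
inductive IsST_Star {A : Type} : STerm A → Prop
  | c {p : STerm A} : IsST_C p → IsST_Star p
  | d {p : STerm A} : IsST_D p → IsST_Star p
end

/-- SCL Normal Form: `P ::= P^T | P^F | P^T ∧◦ P^*`. -/
inductive IsSNF {A : Type} : STerm A → Prop
  | t {p : STerm A} : IsST_T p → IsSNF p
  | f {p : STerm A} : IsST_F p → IsSNF p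
  | ts {p q : STerm A} : IsST_T p → IsST_Star q → IsSNF (STerm.and p q)

/-! ### Trees with box leaves -/

/-- `𝒯_□`: trees over `A` with leaves in `{T, F, □}`. -/
inductive ETreeB (A : Type) : Type
  | tru  : ETreeB A
  | fls  : ETreeB A
  | box  : ETreeB A
  | node : ETreeB A → A → ETreeB A → ETreeB A

namespace ETreeB

/-- `X.substBox Y = X[□↦Y]`. -/
def substBox {A : Type} : ETreeB A → ETree A → ETree A
  | .tru, _ => ETree.tru
  | .fls, _ => ETree.fls
  | .box, y => y
  | .node l a r, y => ETree.node (substBox l y) a (substBox r y)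

def hasBox {A : Type} : ETreeB A → Prop
  | .tru => False
  | .fls => False
  | .box => True
  | .node l _ r => hasBox l ∨ hasBox r

def hasTru {A : Type} : ETreeB A → Prop
  | .tru => True
  | .fls => False
  | .box => False
  | .node l _ r => hasTru l ∨ hasTru r

def hasFls {A : Type} : ETreeB A → Prop
  | .tru => False
  | .fls => True
  | .box => False
  | .node l _ r => hasFls l ∨ hasFls r

end ETreeB

/-- `𝒯_{1,2}`: trees over `A` with leaves in `{T, F, □₁, □₂}`. -/
inductive ETree2 (A : Type) : Type
  | tru  : ETree2 A
  | fls  : ETree2 A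
  | box1 : ETree2 A
  | box2 : ETree2 A
  | node : ETree2 A → A → ETree2 A → ETree2 A

namespace ETree2

/-- `X.substBoxes Y Z = X[□₁↦Y, □₂↦Z]`. -/
def substBoxes {A : Type} : ETree2 A → ETree A → ETree A → ETree A
  | .tru, _, _ => ETree.tru
  | .fls, _, _ => ETree.fls
  | .box1, y, _ => y
  | .box2, _, z => z
  | .node l a r, y, z => ETree.node (substBoxes l y z) a (substBoxes r y z)

def hasBox1 {A : Type} : ETree2 A → Prop
  | .tru => False
  | .fls => False
  | .box1 => True
  | .box2 => False
  | .node l _ r => hasBox1 l ∨ hasBox1 r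

def hasBox2 {A : Type} : ETree2 A → Prop
  | .tru => False
  | .fls => False
  | .box1 => False
  | .box2 => True
  | .node l _ r => hasBox2 l ∨ hasBox2 r

def hasTru {A : Type} : ETree2 A → Prop
  | .tru => True
  | .fls => False
  | .box1 => False
  | .box2 => False
  | .node l _ r => hasTru l ∨ hasTru r

def hasFls {A : Type} : ETree2 A → Prop
  | .tru => False
  | .fls => True
  | .box1 => False
  | .box2 => False
  | .node l _ r => hasFls l ∨ hasFls r

end ETree2

namespace ETree

/-- `X[T↦□₁, F↦□₂]`. -/
def toBoxes {A : Type} : ETree A → ETree2 A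
  | .tru => ETree2.box1
  | .fls => ETree2.box2
  | .node l a r => ETree2.node (toBoxes l) a (toBoxes r)

/-- `X[T↦□]`. -/
def truToBox {A : Type} : ETree A → ETreeB A
  | .tru => ETreeB.box
  | .fls => ETreeB.fls
  | .node l a r => ETreeB.node (truToBox l) a (truToBox r)

/-- `X[F↦□]`. -/
def flsToBox {A : Type} : ETree A → ETreeB A
  | .tru => ETreeB.tru
  | .fls => ETreeB.box
  | .node l a r => ETreeB.node (flsToBox l) a (flsToBox r)

end ETree

/-! ### FEL decompositions -/

/-- Candidate conjunction decomposition (FEL):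
    `X = Y[□₁↦Z, □₂↦Z[T↦F]]`, `Y` contains both boxes, neither `T` nor `F`,
    and `Z` contains both `T` and `F`. -/
def IsCcdF {A : Type} (X : ETree A) (Y : ETree2 A) (Z : ETree A) : Prop :=
  X = Y.substBoxes Z (Z.subst ETree.fls ETree.fls) ∧
  Y.hasBox1 ∧ Y.hasBox2 ∧ ¬ Y.hasTru ∧ ¬ Y.hasFls ∧ Z.hasTru ∧ Z.hasFls

/-- Candidate disjunction decomposition (FEL):
    `X = Y[□₁↦Z[F↦T], □₂↦Z]` with the same side conditions. -/
def IsCddF {A : Type} (X : ETree A) (Y : ETree2 A) (Z : ETree A) : Prop :=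
  X = Y.substBoxes (Z.subst ETree.tru ETree.tru) Z ∧
  Y.hasBox1 ∧ Y.hasBox2 ∧ ¬ Y.hasTru ∧ ¬ Y.hasFls ∧ Z.hasTru ∧ Z.hasFls

/-- Conjunction decomposition (FEL): a ccd with `Z` of minimal depth. -/
def IsCdF {A : Type} (X : ETree A) (Y : ETree2 A) (Z : ETree A) : Prop :=
  IsCcdF X Y Z ∧ ∀ (Y' : ETree2 A) (Z' : ETree A), IsCcdF X Y' Z' → Z.depth ≤ Z'.depth

/-- Disjunction decomposition (FEL): a cdd with `Z` of minimal depth. -/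
def IsDdF {A : Type} (X : ETree A) (Y : ETree2 A) (Z : ETree A) : Prop :=
  IsCddF X Y Z ∧ ∀ (Y' : ETree2 A) (Z' : ETree A), IsCddF X Y' Z' → Z.depth ≤ Z'.depth

/-- T-*-decomposition (FEL): `X = Y[□↦Z]`, `Y` contains neither `T` nor `F`,
    and `Z` admits no nontrivial box decomposition. -/
def IsTsdF {A : Type} (X : ETree A) (Y : ETreeB A) (Z : ETree A) : Prop :=
  X = Y.substBox Z ∧ ¬ Y.hasTru ∧ ¬ Y.hasFls ∧
  ¬ ∃ (U : ETreeB A) (V : ETree A),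
      Z = U.substBox V ∧ U.hasBox ∧ U ≠ ETreeB.box ∧ ¬ U.hasTru ∧ ¬ U.hasFls

/-! ### SCL decompositions -/

/-- Candidate conjunction decomposition (SCL): `X = Y[□↦Z]`, `Y` contains `□`,
    `Y` contains `F` but not `T`, and `Z` contains both `T` and `F`. -/
def IsCcdS {A : Type} (X : ETree A) (Y : ETreeB A) (Z : ETree A) : Prop :=
  X = Y.substBox Z ∧ Y.hasBox ∧ Y.hasFls ∧ ¬ Y.hasTru ∧ Z.hasTru ∧ Z.hasFls

/-- Candidate disjunction decomposition (SCL): `X = Y[□↦Z]`, `Y` contains `□`,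
    `Y` contains `T` but not `F`, and `Z` contains both `T` and `F`. -/
def IsCddS {A : Type} (X : ETree A) (Y : ETreeB A) (Z : ETree A) : Prop :=
  X = Y.substBox Z ∧ Y.hasBox ∧ Y.hasTru ∧ ¬ Y.hasFls ∧ Z.hasTru ∧ Z.hasFls

/-- Conjunction decomposition (SCL): a ccd with `Z` of minimal depth. -/
def IsCdS {A : Type} (X : ETree A) (Y : ETreeB A) (Z : ETree A) : Prop :=
  IsCcdS X Y Z ∧ ∀ (Y' : ETreeB A) (Z' : ETree A), IsCcdS X Y' Z' → Z.depth ≤ Z'.depth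

/-- Disjunction decomposition (SCL): a cdd with `Z` of minimal depth. -/
def IsDdS {A : Type} (X : ETree A) (Y : ETreeB A) (Z : ETree A) : Prop :=
  IsCddS X Y Z ∧ ∀ (Y' : ETreeB A) (Z' : ETree A), IsCddS X Y' Z' → Z.depth ≤ Z'.depth

/-- Candidate T-*-decomposition (SCL). -/
def IsCtsdS {A : Type} (X : ETree A) (Y : ETreeB A) (Z : ETree A) : Prop :=
  X = Y.substBox Z ∧ ¬ Y.hasTru ∧ ¬ Y.hasFls ∧
  ¬ ∃ (U : ETreeB A) (V : ETree A),
      Z = U.substBox V ∧ U.hasBox ∧ U ≠ ETreeB.box ∧ ¬ U.hasTru ∧ ¬ U.hasFls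

/-- T-*-decomposition (SCL): a ctsd with `Z` of minimal depth. -/
def IsTsdS {A : Type} (X : ETree A) (Y : ETreeB A) (Z : ETree A) : Prop :=
  IsCtsdS X Y Z ∧ ∀ (Y' : ETreeB A) (Z' : ETree A), IsCtsdS X Y' Z' → Z.depth ≤ Z'.depth

/-- The translation `h : FTerm → STerm` from FEL-terms to SCL-terms. -/
def hTrans {A : Type} : FTerm A → STerm A
  | FTerm.tru => STerm.tru
  | FTerm.fls => STerm.fls
  | FTerm.atom a => STerm.atom a
  | FTerm.neg p => STerm.neg (hTrans p)
  | FTerm.and p q => STerm.and (STerm.or (hTrans p) (STerm.and (hTrans q) STerm.fls)) (hTrans q)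
  | FTerm.or p q => STerm.or (STerm.and (hTrans p) (STerm.or (hTrans q) STerm.tru)) (hTrans q)

namespace SNFInj

open ETree

variable {A : Type}

/-- `oT w z = w[T↦z]`. -/
abbrev oT (w z : ETree A) : ETree A := w.subst z .fls
/-- `oF w z = w[F↦z]`. -/
abbrev oF (w z : ETree A) : ETree A := w.subst .tru z

@[simp] lemma subst_tru (y z : ETree A) : (ETree.tru).subst y z = y := rfl
@[simp] lemma subst_fls (y z : ETree A) : (ETree.fls).subst y z = z := rfl
@[simp] lemma subst_node (l r y z : ETree A) (a : A) :
    (ETree.node l a r).subst y z = .node (l.subst y z) a (r.subst y z) := rfl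

@[simp] lemma subst_id (s : ETree A) : s.subst .tru .fls = s := by
  induction s <;> simp [*]

lemma subst_subst (s y z y' z' : ETree A) :
    (s.subst y z).subst y' z' = s.subst (y.subst y' z') (z.subst y' z') := by
  induction s <;> simp [*]

@[simp] lemma hasTru_tru : (ETree.tru : ETree A).hasTru := trivial
@[simp] lemma hasTru_fls : ¬ (ETree.fls : ETree A).hasTru := fun h => h
@[simp] lemma hasTru_node {l r : ETree A} {a : A} :
    (ETree.node l a r).hasTru ↔ l.hasTru ∨ r.hasTru := Iff.rfl
@[simp] lemma hasFls_fls : (ETree.fls : ETree A).hasFls := trivial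
@[simp] lemma hasFls_tru : ¬ (ETree.tru : ETree A).hasFls := fun h => h
@[simp] lemma hasFls_node {l r : ETree A} {a : A} :
    (ETree.node l a r).hasFls ↔ l.hasFls ∨ r.hasFls := Iff.rfl

lemma leafex (s : ETree A) : s.hasTru ∨ s.hasFls := by
  induction s with
  | tru => exact Or.inl trivial
  | fls => exact Or.inr trivial
  | node l a r ihl ihr => rcases ihl with h | h
                          · exact Or.inl (Or.inl h)
                          · rcases ihr with h' | h'
                            · exact Or.inl (Or.inr h')
                            · exact Or.inr (Or.inl h)

lemma hasTru_subst {s y z : ETree A} :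
    (s.subst y z).hasTru ↔ (s.hasTru ∧ y.hasTru) ∨ (s.hasFls ∧ z.hasTru) := by
  induction s with
  | tru => simp
  | fls => simp
  | node l a r ihl ihr => simp [ihl, ihr]; tauto

lemma hasFls_subst {s y z : ETree A} :
    (s.subst y z).hasFls ↔ (s.hasTru ∧ y.hasFls) ∨ (s.hasFls ∧ z.hasFls) := by
  induction s with
  | tru => simp
  | fls => simp
  | node l a r ihl ihr => simp [ihl, ihr]; tauto

lemma subst_cancel {s y z y' z' : ETree A} (h : s.subst y z = s.subst y' z') :
    (s.hasTru → y = y') ∧ (s.hasFls → z = z') := by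
  induction s with
  | tru => exact ⟨fun _ => h, fun c => absurd c (by simp)⟩
  | fls => exact ⟨fun c => absurd c (by simp), fun _ => h⟩
  | node l a r ihl ihr =>
      simp only [subst_node, ETree.node.injEq] at h
      obtain ⟨h1, -, h2⟩ := h
      obtain ⟨hl1, hl2⟩ := ihl h1
      obtain ⟨hr1, hr2⟩ := ihr h2
      constructor
      · rintro (h | h); exacts [hl1 h, hr1 h]
      · rintro (h | h); exacts [hl2 h, hr2 h]

lemma subst_congr_left {s : ETree A} (h : ¬ s.hasTru) (y y' z : ETree A) :
    s.subst y z = s.subst y' z := by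
  induction s with
  | tru => exact absurd trivial h
  | fls => rfl
  | node l a r ihl ihr =>
      simp only [hasTru_node] at h
      push_neg at h
      simp [ihl h.1, ihr h.2]

lemma subst_congr_right {s : ETree A} (h : ¬ s.hasFls) (y z z' : ETree A) :
    s.subst y z = s.subst y z' := by
  induction s with
  | tru => rfl
  | fls => exact absurd trivial h
  | node l a r ihl ihr =>
      simp only [hasFls_node] at h
      push_neg at h
      simp [ihl h.1, ihr h.2]

lemma oT_self {w : ETree A} (h : ¬ w.hasTru) (z : ETree A) : oT w z = w := by
  rw [show oT w z = w.subst z .fls from rfl, subst_congr_left h z .tru, subst_id]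

lemma oF_self {w : ETree A} (h : ¬ w.hasFls) (z : ETree A) : oF w z = w := by
  rw [show oF w z = w.subst .tru z from rfl, subst_congr_right h .tru z .fls, subst_id]

@[simp] lemma oT_tru' (z : ETree A) : oT .tru z = z := rfl
@[simp] lemma oT_of_tru (w : ETree A) : oT w .tru = w := by
  rw [show oT w .tru = w.subst .tru .fls from rfl, subst_id]
@[simp] lemma oF_of_fls (w : ETree A) : oF w .fls = w := by
  rw [show oF w .fls = w.subst .tru .fls from rfl, subst_id]

lemma depth_le_subst_right {s y z : ETree A} (h : s.hasFls) :
    z.depth ≤ (s.subst y z).depth := by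
  induction s with
  | tru => exact absurd h (by simp)
  | fls => simp
  | node l a r ihl ihr =>
      simp only [hasFls_node] at h
      simp only [subst_node, ETree.depth]
      rcases h with h | h
      · exact le_trans (ihl h) (by omega)
      · exact le_trans (ihr h) (by omega)

lemma depth_le_subst_left {s y z : ETree A} (h : s.hasTru) :
    y.depth ≤ (s.subst y z).depth := by
  induction s with
  | tru => simp
  | fls => exact absurd h (by simp)
  | node l a r ihl ihr =>
      simp only [hasTru_node] at h
      simp only [subst_node, ETree.depth]
      rcases h with h | h
      · exact le_trans (ihl h) (by omega)
      · exact le_trans (ihr h) (by omega)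

lemma depth_lt_subst_right {l r y z : ETree A} {a : A} (h : (ETree.node l a r).hasFls) :
    z.depth < ((ETree.node l a r).subst y z).depth := by
  simp only [hasFls_node] at h
  simp only [subst_node, ETree.depth]
  rcases h with h | h
  · have := depth_le_subst_right (y := y) (z := z) h; omega
  · have := depth_le_subst_right (y := y) (z := z) h; omega

lemma depth_lt_subst_left {l r y z : ETree A} {a : A} (h : (ETree.node l a r).hasTru) :
    y.depth < ((ETree.node l a r).subst y z).depth := by
  simp only [hasTru_node] at h
  simp only [subst_node, ETree.depth]
  rcases h with h | h
  · have := depth_le_subst_left (y := y) (z := z) h; omega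
  · have := depth_le_subst_left (y := y) (z := z) h; omega

end SNFInj
namespace SNFInj

variable {A : Type}

/-- No nontrivial `[T↦·]` decomposition with a `T`-containing prefix. -/
def P1 (x : ETree A) : Prop :=
  ∀ w z : ETree A, x = oT w z → w.hasTru → z.hasTru → z.hasFls → w = .tru

/-- No nontrivial `[F↦·]` decomposition with an `F`-containing prefix. -/
def P2 (x : ETree A) : Prop :=
  ∀ w z : ETree A, x = oF w z → w.hasFls → z.hasTru → z.hasFls → w = .fls

/-- No nontrivial `[T↦·]` decomposition with an `F`-free prefix. -/
def P3 (x : ETree A) : Prop :=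
  ∀ w z : ETree A, x = oT w z → ¬ w.hasFls → z.hasTru → z.hasFls → w = .tru

/-- No nontrivial `[F↦·]` decomposition with a `T`-free prefix. -/
def P4 (x : ETree A) : Prop :=
  ∀ w z : ETree A, x = oF w z → ¬ w.hasTru → z.hasTru → z.hasFls → w = .fls

/-- shape hypothesis for ℓ-trees -/
def EllShape (l : ETree A) (r : ETree A) : Prop :=
  (¬ l.hasFls ∧ ¬ r.hasTru) ∨ (¬ l.hasTru ∧ ¬ r.hasFls)

lemma P1_ell {l r : ETree A} {a : A} (h : EllShape l r) : P1 (ETree.node l a r) := by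
  rintro w z heq hwT hzT hzF
  cases w with
  | tru => rfl
  | fls => simp at heq
  | node w1 b w2 =>
      simp only [oT, subst_node, ETree.node.injEq] at heq
      obtain ⟨h1, -, h2⟩ := heq
      simp only [hasTru_node] at hwT
      exfalso
      rcases h with ⟨hlF, hrT⟩ | ⟨hlT, hrF⟩
      · rcases hwT with hw | hw
        · exact hlF (h1 ▸ hasFls_subst.2 (Or.inl ⟨hw, hzF⟩))
        · exact hrT (h2 ▸ hasTru_subst.2 (Or.inl ⟨hw, hzT⟩))
      · rcases hwT with hw | hw
        · exact hlT (h1 ▸ hasTru_subst.2 (Or.inl ⟨hw, hzT⟩))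
        · exact hrF (h2 ▸ hasFls_subst.2 (Or.inl ⟨hw, hzF⟩))

lemma P2_ell {l r : ETree A} {a : A} (h : EllShape l r) : P2 (ETree.node l a r) := by
  rintro w z heq hwF hzT hzF
  cases w with
  | fls => rfl
  | tru => simp at heq
  | node w1 b w2 =>
      simp only [oF, subst_node, ETree.node.injEq] at heq
      obtain ⟨h1, -, h2⟩ := heq
      simp only [hasFls_node] at hwF
      exfalso
      rcases h with ⟨hlF, hrT⟩ | ⟨hlT, hrF⟩
      · rcases hwF with hw | hw
        · exact hlF (h1 ▸ hasFls_subst.2 (Or.inr ⟨hw, hzF⟩))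
        · exact hrT (h2 ▸ hasTru_subst.2 (Or.inr ⟨hw, hzT⟩))
      · rcases hwF with hw | hw
        · exact hlT (h1 ▸ hasTru_subst.2 (Or.inr ⟨hw, hzT⟩))
        · exact hrF (h2 ▸ hasFls_subst.2 (Or.inr ⟨hw, hzF⟩))

lemma P3_ell {l r : ETree A} {a : A} (h : EllShape l r) : P3 (ETree.node l a r) := by
  rintro w z heq hwF hzT hzF
  cases w with
  | tru => rfl
  | fls => exact absurd trivial hwF
  | node w1 b w2 =>
      simp only [oT, subst_node, ETree.node.injEq] at heq
      obtain ⟨h1, -, h2⟩ := heq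
      simp only [hasFls_node] at hwF
      push_neg at hwF
      exfalso
      have hw1T : w1.hasTru := (leafex w1).resolve_right hwF.1
      have hw2T : w2.hasTru := (leafex w2).resolve_right hwF.2
      rcases h with ⟨hlF, hrT⟩ | ⟨hlT, hrF⟩
      · exact hlF (h1 ▸ hasFls_subst.2 (Or.inl ⟨hw1T, hzF⟩))
      · exact hlT (h1 ▸ hasTru_subst.2 (Or.inl ⟨hw1T, hzT⟩))

lemma P4_ell {l r : ETree A} {a : A} (h : EllShape l r) : P4 (ETree.node l a r) := by
  rintro w z heq hwT hzT hzF
  cases w with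
  | fls => rfl
  | tru => exact absurd trivial hwT
  | node w1 b w2 =>
      simp only [oF, subst_node, ETree.node.injEq] at heq
      obtain ⟨h1, -, h2⟩ := heq
      simp only [hasTru_node] at hwT
      push_neg at hwT
      exfalso
      have hw1F : w1.hasFls := (leafex w1).resolve_left hwT.1
      have hw2F : w2.hasFls := (leafex w2).resolve_left hwT.2
      rcases h with ⟨hlF, hrT⟩ | ⟨hlT, hrF⟩
      · exact hrT (h2 ▸ hasTru_subst.2 (Or.inr ⟨hw2F, hzT⟩))
      · exact hrF (h2 ▸ hasFls_subst.2 (Or.inr ⟨hw2F, hzF⟩))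

/-- G1: cancellation for `[T↦·]` decompositions with `P1` remainders. -/
lemma g1 {z1 z2 : ETree A} (h1T : z1.hasTru) (h1F : z1.hasFls) (h2T : z2.hasTru)
    (h2F : z2.hasFls) (p1 : P1 z1) (p2 : P1 z2) :
    ∀ s1 s2 : ETree A, oT s1 z1 = oT s2 z2 → s1 = s2 ∧ (s1.hasTru → z1 = z2) := by
  intro s1
  induction s1 with
  | tru =>
      intro s2 h
      simp only [oT_tru'] at h
      by_cases hs : s2.hasTru
      · have h2 := p1 s2 z2 h hs h2T h2F
        subst h2
        simp only [oT_tru'] at h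
        exact ⟨rfl, fun _ => h⟩
      · rw [oT_self hs] at h
        exact absurd (h ▸ h1T) hs
  | fls =>
      intro s2 h
      cases s2 with
      | tru => simp only [oT_tru'] at h; exact absurd (h ▸ h2T) (by simp)
      | fls => exact ⟨rfl, fun c => absurd c (by simp)⟩
      | node l2 b r2 => simp [oT] at h
  | node l a r ihl ihr =>
      intro s2 h
      cases s2 with
      | tru =>
          simp only [oT_tru'] at h
          by_cases hs : (ETree.node l a r).hasTru
          · have := p2 (ETree.node l a r) z1 h.symm hs h1T h1F
            simp at this
          · rw [oT_self hs] at h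
            exact absurd (h.symm ▸ h2T) hs
      | fls => simp [oT] at h
      | node l2 b r2 =>
          simp only [oT, subst_node, ETree.node.injEq] at h
          obtain ⟨h1, hab, h2⟩ := h
          obtain ⟨hl, hlT⟩ := ihl l2 h1
          obtain ⟨hr, hrT⟩ := ihr r2 h2
          subst hl; subst hr; subst hab
          refine ⟨rfl, ?_⟩
          rintro (h | h); exacts [hlT h, hrT h]

@[simp] lemma oF_fls' (z : ETree A) : oF .fls z = z := rfl

/-- G2: dual of G1. -/
lemma g2 {z1 z2 : ETree A} (h1T : z1.hasTru) (h1F : z1.hasFls) (h2T : z2.hasTru)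
    (h2F : z2.hasFls) (p1 : P2 z1) (p2 : P2 z2) :
    ∀ s1 s2 : ETree A, oF s1 z1 = oF s2 z2 → s1 = s2 ∧ (s1.hasFls → z1 = z2) := by
  intro s1
  induction s1 with
  | fls =>
      intro s2 h
      simp only [oF_fls'] at h
      by_cases hs : s2.hasFls
      · have h2 := p1 s2 z2 h hs h2T h2F
        subst h2
        simp only [oF_fls'] at h
        exact ⟨rfl, fun _ => h⟩
      · rw [oF_self hs] at h
        exact absurd (h ▸ h1F) hs
  | tru =>
      intro s2 h
      cases s2 with
      | fls => simp only [oF_fls'] at h; exact absurd (h ▸ h2F) (by simp)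
      | tru => exact ⟨rfl, fun c => absurd c (by simp)⟩
      | node l2 b r2 => simp [oF] at h
  | node l a r ihl ihr =>
      intro s2 h
      cases s2 with
      | fls =>
          simp only [oF_fls'] at h
          by_cases hs : (ETree.node l a r).hasFls
          · have := p2 (ETree.node l a r) z1 h.symm hs h1T h1F
            simp at this
          · rw [oF_self hs] at h
            exact absurd (h.symm ▸ h2F) hs
      | tru => simp [oF] at h
      | node l2 b r2 =>
          simp only [oF, subst_node, ETree.node.injEq] at h
          obtain ⟨h1, hab, h2⟩ := h
          obtain ⟨hl, hlF⟩ := ihl l2 h1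
          obtain ⟨hr, hrF⟩ := ihr r2 h2
          subst hl; subst hr; subst hab
          refine ⟨rfl, ?_⟩
          rintro (h | h); exacts [hlF h, hrF h]

end SNFInj
namespace SNFInj

variable {A : Type}

/-- MASTER: peeling a `[T↦D]` composition against another `[T↦z]` one, `D` prime. -/
lemma master {D : ETree A} (hDT : D.hasTru) (hDF : D.hasFls) (hD1 : P1 D) :
    ∀ s w z : ETree A, oT s D = oT w z → z.hasTru → z.hasFls →
      ∃ v, s = oT w v ∧ (w.hasTru → z = oT v D) := by
  intro s
  induction s with
  | tru =>
      intro w z h hzT hzF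
      simp only [oT_tru'] at h
      by_cases hw : w.hasTru
      · have hwt := hD1 w z h hw hzT hzF
        subst hwt
        simp only [oT_tru'] at h
        exact ⟨.tru, rfl, fun _ => by simp [h]⟩
      · rw [oT_self hw] at h
        exact absurd (h ▸ hDT) hw
  | fls =>
      intro w z h hzT hzF
      simp only [show oT .fls D = .fls from rfl] at h
      cases w with
      | tru => simp only [oT_tru'] at h; exact absurd (h ▸ hzT) (by simp)
      | fls => exact ⟨.tru, rfl, fun c => absurd c (by simp)⟩
      | node w1 b w2 => simp [oT] at h
  | node l a r ihl ihr =>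
      intro w z h hzT hzF
      cases w with
      | tru =>
          simp only [oT_tru'] at h
          exact ⟨.node l a r, rfl, fun _ => h.symm⟩
      | fls => simp [oT] at h
      | node w1 b w2 =>
          simp only [oT, subst_node, ETree.node.injEq] at h
          obtain ⟨h1, hab, h2⟩ := h
          subst hab
          obtain ⟨v1, hv1, hi1⟩ := ihl w1 z h1 hzT hzF
          obtain ⟨v2, hv2, hi2⟩ := ihr w2 z h2 hzT hzF
          by_cases hw1 : w1.hasTru
          · by_cases hw2 : w2.hasTru
            · have hz1 := hi1 hw1
              have hz2 := hi2 hw2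
              obtain ⟨hv, -⟩ := g1 hDT hDF hDT hDF hD1 hD1 v1 v2 (hz1.symm.trans hz2)
              refine ⟨v1, ?_, fun _ => hz1⟩
              simp only [oT, subst_node]
              rw [← hv] at hv2
              exact congrArg₂ (fun x y => ETree.node x _ y) hv1 hv2 ▸ rfl
            · refine ⟨v1, ?_, fun _ => hi1 hw1⟩
              simp only [oT, subst_node]
              rw [show w2.subst v1 .fls = w2 from oT_self hw2 v1]
              rw [show r = w2 from (oT_self hw2 v2) ▸ hv2]
              rw [hv1]
              try rfl
          · by_cases hw2 : w2.hasTru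
            · refine ⟨v2, ?_, fun _ => hi2 hw2⟩
              simp only [oT, subst_node]
              rw [show w1.subst v2 .fls = w1 from oT_self hw1 v2]
              rw [show l = w1 from (oT_self hw1 v1) ▸ hv1]
              rw [hv2]
              try rfl
            · refine ⟨v1, ?_, fun c => ?_⟩
              · simp only [oT, subst_node]
                rw [show w1.subst v1 .fls = w1 from oT_self hw1 v1]
                rw [show w2.subst v1 .fls = w2 from oT_self hw2 v1]
                rw [show l = w1 from (oT_self hw1 v1) ▸ hv1]
                rw [show r = w2 from (oT_self hw2 v2) ▸ hv2]
                try rfl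
              · rcases c with c | c; exacts [absurd c hw1, absurd c hw2]

/-- dual MASTER. -/
lemma masterf {C : ETree A} (hCT : C.hasTru) (hCF : C.hasFls) (hC2 : P2 C) :
    ∀ s w z : ETree A, oF s C = oF w z → z.hasTru → z.hasFls →
      ∃ v, s = oF w v ∧ (w.hasFls → z = oF v C) := by
  intro s
  induction s with
  | fls =>
      intro w z h hzT hzF
      simp only [oF_fls'] at h
      by_cases hw : w.hasFls
      · have hwt := hC2 w z h hw hzT hzF
        subst hwt
        simp only [oF_fls'] at h
        exact ⟨.fls, rfl, fun _ => by simp [h]⟩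
      · rw [oF_self hw] at h
        exact absurd (h ▸ hCF) hw
  | tru =>
      intro w z h hzT hzF
      simp only [show oF .tru C = .tru from rfl] at h
      cases w with
      | fls => simp only [oF_fls'] at h; exact absurd (h ▸ hzF) (by simp)
      | tru => exact ⟨.fls, rfl, fun c => absurd c (by simp)⟩
      | node w1 b w2 => simp [oF] at h
  | node l a r ihl ihr =>
      intro w z h hzT hzF
      cases w with
      | fls =>
          simp only [oF_fls'] at h
          exact ⟨.node l a r, rfl, fun _ => h.symm⟩
      | tru => simp [oF] at h
      | node w1 b w2 =>
          simp only [oF, subst_node, ETree.node.injEq] at h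
          obtain ⟨h1, hab, h2⟩ := h
          subst hab
          obtain ⟨v1, hv1, hi1⟩ := ihl w1 z h1 hzT hzF
          obtain ⟨v2, hv2, hi2⟩ := ihr w2 z h2 hzT hzF
          by_cases hw1 : w1.hasFls
          · by_cases hw2 : w2.hasFls
            · have hz1 := hi1 hw1
              have hz2 := hi2 hw2
              obtain ⟨hv, -⟩ := g2 hCT hCF hCT hCF hC2 hC2 v1 v2 (hz1.symm.trans hz2)
              refine ⟨v1, ?_, fun _ => hz1⟩
              simp only [oF, subst_node]
              rw [← hv] at hv2
              exact congrArg₂ (fun x y => ETree.node x _ y) hv1 hv2 ▸ rfl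
            · refine ⟨v1, ?_, fun _ => hi1 hw1⟩
              simp only [oF, subst_node]
              rw [show w2.subst .tru v1 = w2 from oF_self hw2 v1]
              rw [show r = w2 from (oF_self hw2 v2) ▸ hv2]
              rw [hv1]
              try rfl
          · by_cases hw2 : w2.hasFls
            · refine ⟨v2, ?_, fun _ => hi2 hw2⟩
              simp only [oF, subst_node]
              rw [show w1.subst .tru v2 = w1 from oF_self hw1 v2]
              rw [show l = w1 from (oF_self hw1 v1) ▸ hv1]
              rw [hv2]
              try rfl
            · refine ⟨v1, ?_, fun c => ?_⟩
              · simp only [oF, subst_node]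
                rw [show w1.subst .tru v1 = w1 from oF_self hw1 v1]
                rw [show w2.subst .tru v1 = w2 from oF_self hw2 v1]
                rw [show l = w1 from (oF_self hw1 v1) ▸ hv1]
                rw [show r = w2 from (oF_self hw2 v2) ▸ hv2]
                try rfl
              · rcases c with c | c; exacts [absurd c hw1, absurd c hw2]

/-- mixed MASTER: `[T↦D]` against `[F↦z]` with `T`-free prefix. -/
lemma masterx {D : ETree A} (hDT : D.hasTru) (hDF : D.hasFls) (hD1 : P1 D) (hD4 : P4 D) :
    ∀ s w z : ETree A, oT s D = oF w z → ¬ w.hasTru → z.hasTru → z.hasFls →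
      ∃ v, s = oF w v ∧ (w.hasFls → z = oT v D) := by
  intro s
  induction s with
  | tru =>
      intro w z h hwT hzT hzF
      simp only [oT_tru'] at h
      have hwf := hD4 w z h hwT hzT hzF
      subst hwf
      simp only [oF_fls'] at h
      exact ⟨.tru, rfl, fun _ => by simp [h]⟩
  | fls =>
      intro w z h hwT hzT hzF
      simp only [show oT .fls D = .fls from rfl] at h
      cases w with
      | tru => exact absurd trivial hwT
      | fls => simp only [oF_fls'] at h; exact absurd (h ▸ hzT) (by simp)
      | node w1 b w2 => simp [oF] at h
  | node l a r ihl ihr =>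
      intro w z h hwT hzT hzF
      cases w with
      | tru => exact absurd trivial hwT
      | fls =>
          simp only [oF_fls'] at h
          exact ⟨.node l a r, rfl, fun _ => h.symm⟩
      | node w1 b w2 =>
          simp only [oT, oF, subst_node, ETree.node.injEq] at h
          obtain ⟨h1, hab, h2⟩ := h
          subst hab
          simp only [hasTru_node] at hwT
          push_neg at hwT
          obtain ⟨v1, hv1, hi1⟩ := ihl w1 z h1 hwT.1 hzT hzF
          obtain ⟨v2, hv2, hi2⟩ := ihr w2 z h2 hwT.2 hzT hzF
          by_cases hw1 : w1.hasFls
          · by_cases hw2 : w2.hasFls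
            · have hz1 := hi1 hw1
              have hz2 := hi2 hw2
              obtain ⟨hv, -⟩ := g1 hDT hDF hDT hDF hD1 hD1 v1 v2 (hz1.symm.trans hz2)
              refine ⟨v1, ?_, fun _ => hz1⟩
              simp only [oF, subst_node]
              rw [← hv] at hv2
              exact congrArg₂ (fun x y => ETree.node x _ y) hv1 hv2 ▸ rfl
            · refine ⟨v1, ?_, fun _ => hi1 hw1⟩
              simp only [oF, subst_node]
              rw [show w2.subst .tru v1 = w2 from oF_self hw2 v1]
              rw [show r = w2 from (oF_self hw2 v2) ▸ hv2]
              rw [hv1]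
              try rfl
          · by_cases hw2 : w2.hasFls
            · refine ⟨v2, ?_, fun _ => hi2 hw2⟩
              simp only [oF, subst_node]
              rw [show w1.subst .tru v2 = w1 from oF_self hw1 v2]
              rw [show l = w1 from (oF_self hw1 v1) ▸ hv1]
              rw [hv2]
              try rfl
            · refine ⟨v1, ?_, fun c => ?_⟩
              · simp only [oF, subst_node]
                rw [show w1.subst .tru v1 = w1 from oF_self hw1 v1]
                rw [show w2.subst .tru v1 = w2 from oF_self hw2 v1]
                rw [show l = w1 from (oF_self hw1 v1) ▸ hv1]
                rw [show r = w2 from (oF_self hw2 v2) ▸ hv2]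
                try rfl
              · rcases c with c | c; exacts [absurd c hw1, absurd c hw2]

/-- mixed MASTER, dual: `[F↦C]` against `[T↦z]` with `F`-free prefix. -/
lemma masterxd {C : ETree A} (hCT : C.hasTru) (hCF : C.hasFls) (hC2 : P2 C) (hC3 : P3 C) :
    ∀ s w z : ETree A, oF s C = oT w z → ¬ w.hasFls → z.hasTru → z.hasFls →
      ∃ v, s = oT w v ∧ (w.hasTru → z = oF v C) := by
  intro s
  induction s with
  | fls =>
      intro w z h hwF hzT hzF
      simp only [oF_fls'] at h
      have hwt := hC3 w z h hwF hzT hzF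
      subst hwt
      simp only [oT_tru'] at h
      exact ⟨.fls, rfl, fun _ => by simp [h]⟩
  | tru =>
      intro w z h hwF hzT hzF
      simp only [show oF .tru C = .tru from rfl] at h
      cases w with
      | fls => exact absurd trivial hwF
      | tru => simp only [oT_tru'] at h; exact absurd (h ▸ hzF) (by simp)
      | node w1 b w2 => simp [oT] at h
  | node l a r ihl ihr =>
      intro w z h hwF hzT hzF
      cases w with
      | fls => exact absurd trivial hwF
      | tru =>
          simp only [oT_tru'] at h
          exact ⟨.node l a r, rfl, fun _ => h.symm⟩
      | node w1 b w2 =>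
          simp only [oT, oF, subst_node, ETree.node.injEq] at h
          obtain ⟨h1, hab, h2⟩ := h
          subst hab
          simp only [hasFls_node] at hwF
          push_neg at hwF
          obtain ⟨v1, hv1, hi1⟩ := ihl w1 z h1 hwF.1 hzT hzF
          obtain ⟨v2, hv2, hi2⟩ := ihr w2 z h2 hwF.2 hzT hzF
          by_cases hw1 : w1.hasTru
          · by_cases hw2 : w2.hasTru
            · have hz1 := hi1 hw1
              have hz2 := hi2 hw2
              obtain ⟨hv, -⟩ := g2 hCT hCF hCT hCF hC2 hC2 v1 v2 (hz1.symm.trans hz2)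
              refine ⟨v1, ?_, fun _ => hz1⟩
              simp only [oT, subst_node]
              rw [← hv] at hv2
              exact congrArg₂ (fun x y => ETree.node x _ y) hv1 hv2 ▸ rfl
            · refine ⟨v1, ?_, fun _ => hi1 hw1⟩
              simp only [oT, subst_node]
              rw [show w2.subst v1 .fls = w2 from oT_self hw2 v1]
              rw [show r = w2 from (oT_self hw2 v2) ▸ hv2]
              rw [hv1]
              try rfl
          · by_cases hw2 : w2.hasTru
            · refine ⟨v2, ?_, fun _ => hi2 hw2⟩
              simp only [oT, subst_node]
              rw [show w1.subst v2 .fls = w1 from oT_self hw1 v2]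
              rw [show l = w1 from (oT_self hw1 v1) ▸ hv1]
              rw [hv2]
              try rfl
            · refine ⟨v1, ?_, fun c => ?_⟩
              · simp only [oT, subst_node]
                rw [show w1.subst v1 .fls = w1 from oT_self hw1 v1]
                rw [show w2.subst v1 .fls = w2 from oT_self hw2 v1]
                rw [show l = w1 from (oT_self hw1 v1) ▸ hv1]
                rw [show r = w2 from (oT_self hw2 v2) ▸ hv2]
                try rfl
              · rcases c with c | c; exacts [absurd c hw1, absurd c hw2]

end SNFInj
namespace SNFInj

variable {A : Type}

lemma node_oT {l r w1 w2 v : ETree A} {a : A} (el : l = oT w1 v) (er : r = oT w2 v) :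
    ETree.node l a r = oT (ETree.node w1 a w2) v := by
  show ETree.node l a r = ETree.node (oT w1 v) a (oT w2 v)
  rw [← el, ← er]

lemma node_oF {l r w1 w2 v : ETree A} {a : A} (el : l = oF w1 v) (er : r = oF w2 v) :
    ETree.node l a r = oF (ETree.node w1 a w2) v := by
  show ETree.node l a r = ETree.node (oF w1 v) a (oF w2 v)
  rw [← el, ← er]

lemma noT_of_oT_self {x D : ETree A} (h : oT x D = x) (hDF : D.hasFls) : ¬ x.hasTru := by
  intro hx
  have h' : x.subst D .fls = x.subst .tru .fls := by rw [subst_id]; exact h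
  have := (subst_cancel h').1 hx
  exact absurd (this ▸ hDF) (by simp)

lemma noF_of_oF_self {x Z : ETree A} (h : oF x Z = x) (hZT : Z.hasTru) : ¬ x.hasFls := by
  intro hx
  have h' : x.subst .tru Z = x.subst .tru .fls := by rw [subst_id]; exact h
  have := (subst_cancel h').2 hx
  exact absurd (this ▸ hZT) (by simp)

/-- MIXBRANCH: comparing a `[T↦D]` decomposition with an `[F↦Z]` one, branchwise. -/
lemma mixbranch {D Z : ETree A} (hDT : D.hasTru) (hDF : D.hasFls) (hZT : Z.hasTru)
    (hZF : Z.hasFls) (hD1 : P1 D) (hZ2 : P2 Z) :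
    ∀ s w : ETree A, oT s D = oF w Z →
      (∃ v, s = oF w v ∧ (w.hasFls → Z = oT v D)) ∨
      (∃ u, w = oT s u ∧ (s.hasTru → D = oF u Z)) := by
  intro s
  induction s with
  | tru =>
      intro w h
      simp only [oT_tru'] at h
      exact Or.inr ⟨w, rfl, fun _ => h⟩
  | fls =>
      intro w h
      simp only [show oT .fls D = .fls from rfl] at h
      cases w with
      | tru => simp [oF] at h
      | fls => simp only [oF_fls'] at h; exact absurd (h ▸ hZT) (by simp)
      | node w1 b w2 => simp [oF] at h
  | node l a r ihl ihr =>
      intro w h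
      cases w with
      | tru => simp [oT, oF] at h
      | fls =>
          simp only [oF_fls'] at h
          exact Or.inl ⟨.node l a r, rfl, fun _ => h.symm⟩
      | node w1 b w2 =>
          simp only [oT, oF, subst_node, ETree.node.injEq] at h
          obtain ⟨h1, hab, h2⟩ := h
          subst hab
          rcases ihl w1 h1 with ⟨v1, hv1, hi1⟩ | ⟨u1, hu1, hj1⟩
          · rcases ihr w2 h2 with ⟨v2, hv2, hi2⟩ | ⟨u2, hu2, hj2⟩
            · -- (L1, R1): merge to left
              by_cases hw1 : w1.hasFls
              · by_cases hw2 : w2.hasFls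
                · obtain ⟨hv, -⟩ := g1 hDT hDF hDT hDF hD1 hD1 v1 v2
                    ((hi1 hw1).symm.trans (hi2 hw2))
                  subst hv
                  exact Or.inl ⟨v1, node_oF hv1 hv2, fun _ => hi1 hw1⟩
                · refine Or.inl ⟨v1, node_oF hv1 ?_, fun _ => hi1 hw1⟩
                  rw [hv2, oF_self hw2, oF_self hw2]
              · by_cases hw2 : w2.hasFls
                · refine Or.inl ⟨v2, node_oF ?_ hv2, fun _ => hi2 hw2⟩
                  rw [hv1, oF_self hw1, oF_self hw1]
                · refine Or.inl ⟨v1, node_oF hv1 ?_, fun c => ?_⟩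
                  · rw [hv2, oF_self hw2, oF_self hw2]
                  · rcases c with c | c; exacts [absurd c hw1, absurd c hw2]
            · -- (L1, R2): mixed
              by_cases hw1 : w1.hasFls
              · by_cases hr : r.hasTru
                · -- hard case: Z = oT v1 D and D = oF u2 Z
                  have hZD := hi1 hw1
                  have hDZ := hj2 hr
                  by_cases hu2F : u2.hasFls
                  · -- depth forces v1 = tru, u2 = fls, Z = D
                    have hd2 : Z.depth ≤ D.depth := by
                      calc Z.depth ≤ (u2.subst .tru Z).depth := depth_le_subst_right hu2F
                        _ = D.depth := by rw [hDZ]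
                    have hv1tru : v1 = .tru := by
                      cases v1 with
                      | tru => rfl
                      | fls =>
                          rw [show oT .fls D = .fls from rfl] at hZD
                          exact absurd (hZD ▸ hZT) (by simp)
                      | node x y zz =>
                          exfalso
                          have hvT : (ETree.node x y zz).hasTru := by
                            by_contra hvT
                            rw [oT_self hvT] at hZD
                            exact hvT (hZD ▸ hZT)
                          have := depth_lt_subst_left (y := D) (z := ETree.fls) hvT
                          rw [show (ETree.node x y zz).subst D ETree.fls = Z from hZD.symm]
                            at this
                          omega
                    subst hv1tru
                    simp only [oT_tru'] at hZD
                    -- hZD : Z = D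
                    have hu2fls : u2 = .fls := by
                      cases u2 with
                      | fls => rfl
                      | tru => exact absurd hu2F (by simp)
                      | node x y zz =>
                          exfalso
                          have := depth_lt_subst_right (y := ETree.tru) (z := Z) hu2F
                          rw [show (ETree.node x y zz).subst ETree.tru Z = D from hDZ.symm]
                            at this
                          rw [hZD] at this
                          exact absurd this (lt_irrefl _)
                    subst hu2fls
                    -- derive ¬ r.hasFls from branch 2
                    rw [hu2] at h2
                    rw [show (oT r ETree.fls).subst ETree.tru Z = r.subst Z Z from by
                      rw [show oT r ETree.fls = r.subst ETree.fls ETree.fls from rfl,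
                        subst_subst]; rfl] at h2
                    rw [← hZD] at h2
                    have hrF : ¬ r.hasFls := by
                      intro hrf
                      have := (subst_cancel h2).2 hrf
                      rw [← hZD, ← this] at hDT
                      exact absurd hDT (by simp)
                    refine Or.inl ⟨.tru, node_oF hv1 ?_, fun _ => by
                      rw [oT_tru']; exact hZD⟩
                    rw [hu2]
                    show r = (r.subst ETree.fls ETree.fls).subst ETree.tru ETree.tru
                    rw [subst_subst]
                    show r = r.subst ETree.tru ETree.tru
                    rw [subst_congr_right hrF ETree.tru ETree.tru ETree.fls, subst_id]
                  · -- u2 has no F: D = u2, contradiction via branch 2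
                    rw [oF_self hu2F] at hDZ
                    rw [← hDZ] at hu2
                    rw [hu2] at h2
                    have : ¬ (oT r D).hasFls := noF_of_oF_self h2.symm hZT
                    exact absurd (hasFls_subst.2 (Or.inl ⟨hr, hDF⟩)) this
                · -- r has no T
                  have hw2r : w2 = r := by rw [hu2, oT_self hr]
                  rw [hw2r] at h2
                  have hid : r.subst ETree.tru Z = r := by
                    rw [← h2, subst_congr_left hr D ETree.tru, subst_id]
                  have hrF : ¬ r.hasFls := noF_of_oF_self hid hZT
                  rcases leafex r with hh | hh
                  · exact absurd hh hr
                  · exact absurd hh hrF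
              · -- w1 has no F : l = w1, no T in l, go right
                have hlw : l = w1 := by rw [hv1, oF_self hw1]
                have hlT : ¬ l.hasTru := by
                  have h1' : oT l D = oF w1 Z := h1
                  rw [← hlw, oF_self (hlw ▸ hw1)] at h1'
                  exact noT_of_oT_self h1' hDF
                by_cases hr : r.hasTru
                · refine Or.inr ⟨u2, node_oT ?_ hu2, fun _ => hj2 hr⟩
                  rw [oT_self hlT, hlw]
                · refine Or.inr ⟨u2, node_oT ?_ hu2, fun c => ?_⟩
                  · rw [oT_self hlT, hlw]
                  · rcases c with c | c; exacts [absurd c hlT, absurd c hr]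
          · rcases ihr w2 h2 with ⟨v2, hv2, hi2⟩ | ⟨u2, hu2, hj2⟩
            · -- (L2, R1): mirror of (L1, R2)
              by_cases hw2 : w2.hasFls
              · by_cases hl : l.hasTru
                · -- hard case: Z = oT v2 D and D = oF u1 Z
                  have hZD := hi2 hw2
                  have hDZ := hj1 hl
                  by_cases hu1F : u1.hasFls
                  · have hd2 : Z.depth ≤ D.depth := by
                      calc Z.depth ≤ (u1.subst .tru Z).depth := depth_le_subst_right hu1F
                        _ = D.depth := by rw [hDZ]
                    have hv2tru : v2 = .tru := by
                      cases v2 with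
                      | tru => rfl
                      | fls =>
                          rw [show oT .fls D = .fls from rfl] at hZD
                          exact absurd (hZD ▸ hZT) (by simp)
                      | node x y zz =>
                          exfalso
                          have hvT : (ETree.node x y zz).hasTru := by
                            by_contra hvT
                            rw [oT_self hvT] at hZD
                            exact hvT (hZD ▸ hZT)
                          have := depth_lt_subst_left (y := D) (z := ETree.fls) hvT
                          rw [show (ETree.node x y zz).subst D ETree.fls = Z from hZD.symm]
                            at this
                          omega
                    subst hv2tru
                    simp only [oT_tru'] at hZD
                    have hu1fls : u1 = .fls := by
                      cases u1 with
                      | fls => rfl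
                      | tru => exact absurd hu1F (by simp)
                      | node x y zz =>
                          exfalso
                          have := depth_lt_subst_right (y := ETree.tru) (z := Z) hu1F
                          rw [show (ETree.node x y zz).subst ETree.tru Z = D from hDZ.symm]
                            at this
                          rw [hZD] at this
                          exact absurd this (lt_irrefl _)
                    subst hu1fls
                    rw [hu1] at h1
                    rw [show (oT l ETree.fls).subst ETree.tru Z = l.subst Z Z from by
                      rw [show oT l ETree.fls = l.subst ETree.fls ETree.fls from rfl,
                        subst_subst]; rfl] at h1
                    rw [← hZD] at h1
                    have hlF : ¬ l.hasFls := by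
                      intro hlf
                      have := (subst_cancel h1).2 hlf
                      rw [← hZD, ← this] at hDT
                      exact absurd hDT (by simp)
                    refine Or.inl ⟨.tru, node_oF ?_ hv2, fun _ => by
                      rw [oT_tru']; exact hZD⟩
                    rw [hu1]
                    show l = (l.subst ETree.fls ETree.fls).subst ETree.tru ETree.tru
                    rw [subst_subst]
                    show l = l.subst ETree.tru ETree.tru
                    rw [subst_congr_right hlF ETree.tru ETree.tru ETree.fls, subst_id]
                  · rw [oF_self hu1F] at hDZ
                    rw [← hDZ] at hu1
                    rw [hu1] at h1
                    have : ¬ (oT l D).hasFls := noF_of_oF_self h1.symm hZT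
                    exact absurd (hasFls_subst.2 (Or.inl ⟨hl, hDF⟩)) this
                · -- l has no T
                  have hw1l : w1 = l := by rw [hu1, oT_self hl]
                  rw [hw1l] at h1
                  have hid : l.subst ETree.tru Z = l := by
                    rw [← h1, subst_congr_left hl D ETree.tru, subst_id]
                  have hlF : ¬ l.hasFls := noF_of_oF_self hid hZT
                  rcases leafex l with hh | hh
                  · exact absurd hh hl
                  · exact absurd hh hlF
              · -- w2 has no F : r = w2, no T in r, go right
                have hrw : r = w2 := by rw [hv2, oF_self hw2]
                have hrT : ¬ r.hasTru := by
                  have h2' : oT r D = oF w2 Z := h2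
                  rw [← hrw, oF_self (hrw ▸ hw2)] at h2'
                  exact noT_of_oT_self h2' hDF
                by_cases hl : l.hasTru
                · refine Or.inr ⟨u1, node_oT hu1 ?_, fun _ => hj1 hl⟩
                  rw [oT_self hrT, hrw]
                · refine Or.inr ⟨u1, node_oT hu1 ?_, fun c => ?_⟩
                  · rw [oT_self hrT, hrw]
                  · rcases c with c | c; exacts [absurd c hl, absurd c hrT]
            · -- (L2, R2): merge to right
              by_cases hl : l.hasTru
              · by_cases hrr : r.hasTru
                · obtain ⟨hu, -⟩ := g2 hZT hZF hZT hZF hZ2 hZ2 u1 u2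
                    ((hj1 hl).symm.trans (hj2 hrr))
                  subst hu
                  exact Or.inr ⟨u1, node_oT hu1 hu2, fun _ => hj1 hl⟩
                · refine Or.inr ⟨u1, node_oT hu1 ?_, fun _ => hj1 hl⟩
                  rw [hu2, oT_self hrr, oT_self hrr]
              · by_cases hrr : r.hasTru
                · refine Or.inr ⟨u2, node_oT ?_ hu2, fun _ => hj2 hrr⟩
                  rw [hu1, oT_self hl, oT_self hl]
                · refine Or.inr ⟨u1, node_oT hu1 ?_, fun c => ?_⟩
                  · rw [hu2, oT_self hrr, oT_self hrr]
                  · rcases c with c | c; exacts [absurd c hl, absurd c hrr]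

end SNFInj
namespace SNFInj

variable {A : Type}

lemma oT_assoc (x y z : ETree A) : oT (oT x y) z = oT x (oT y z) := by
  show (x.subst y .fls).subst z .fls = _
  rw [subst_subst]; rfl

lemma oF_assoc (x y z : ETree A) : oF (oF x y) z = oF x (oF y z) := by
  show (x.subst .tru y).subst .tru z = _
  rw [subst_subst]; rfl

/-- A conjunction tree `S[T↦D]` (with `S` having both leaves and `D` prime) has no cdd. -/
lemma nocdd {S D : ETree A} (hST : S.hasTru) (hSF : S.hasFls) (hDT : D.hasTru)
    (hDF : D.hasFls) (hD1 : P1 D) :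
    ∀ w z : ETree A, oT S D = oF w z → w.hasTru → w.hasFls → z.hasTru → z.hasFls → False := by
  intro w z heq hwT hwF hzT hzF
  set Sset : Set ℕ := {n | ∃ w' z' : ETree A, oT S D = oF w' z' ∧ w'.hasTru ∧ w'.hasFls ∧
    z'.hasTru ∧ z'.hasFls ∧ z'.depth = n} with hSset
  have hne : Sset.Nonempty := ⟨z.depth, w, z, heq, hwT, hwF, hzT, hzF, rfl⟩
  obtain ⟨w0, z0, heq0, hw0T, hw0F, hz0T, hz0F, hd0⟩ := Nat.sInf_mem hne
  have hmin : P2 z0 := by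
    intro v z'' hvz hvF hz''T hz''F
    cases v with
    | fls => rfl
    | tru => exact absurd hvF (by simp)
    | node v1 b v2 =>
        exfalso
        have heq' : oT S D = oF (oF w0 (ETree.node v1 b v2)) z'' := by
          rw [oF_assoc, ← hvz, ← heq0]
        have hmem : z''.depth ∈ Sset := by
          refine ⟨oF w0 (ETree.node v1 b v2), z'', heq', ?_, ?_, hz''T, hz''F, rfl⟩
          · exact hasTru_subst.2 (Or.inl ⟨hw0T, trivial⟩)
          · exact hasFls_subst.2 (Or.inr ⟨hw0F, hvF⟩)
        have hle := Nat.sInf_le hmem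
        have hlt : z''.depth < z0.depth := by
          rw [hvz]
          exact depth_lt_subst_right hvF
        omega
  rcases mixbranch hDT hDF hz0T hz0F hD1 hmin S w0 heq0 with ⟨v, hSv, hiv⟩ | ⟨u, hwu, hju⟩
  · have hZoT := hiv hw0F
    have e1 : oT S D = w0.subst D z0 := by
      rw [hSv, hZoT]
      show (w0.subst .tru v).subst D .fls = w0.subst D (v.subst D .fls)
      rw [subst_subst]; rfl
    have e2 : oT S D = w0.subst .tru z0 := heq0
    have hDt := (subst_cancel (e1.symm.trans e2)).1 hw0T
    exact absurd (hDt ▸ hDF) (by simp)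
  · have hDoF := hju hST
    have e1 : oT S D = S.subst D z0 := by
      rw [heq0, hwu]
      show (S.subst u .fls).subst .tru z0 = S.subst D z0
      rw [subst_subst, hDoF]; rfl
    have e2 : oT S D = S.subst D .fls := rfl
    have hzf := (subst_cancel (e2.symm.trans e1)).2 hSF
    rw [← hzf] at hz0T
    exact absurd hz0T (by simp)

/-- A disjunction tree `S[F↦C]` (with `S` having both leaves and `C` prime) has no ccd. -/
lemma noccd {S C : ETree A} (hST : S.hasTru) (hSF : S.hasFls) (hCT : C.hasTru)
    (hCF : C.hasFls) (hC2 : P2 C) :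
    ∀ w z : ETree A, oF S C = oT w z → w.hasTru → w.hasFls → z.hasTru → z.hasFls → False := by
  intro w z heq hwT hwF hzT hzF
  set Sset : Set ℕ := {n | ∃ w' z' : ETree A, oF S C = oT w' z' ∧ w'.hasTru ∧ w'.hasFls ∧
    z'.hasTru ∧ z'.hasFls ∧ z'.depth = n} with hSset
  have hne : Sset.Nonempty := ⟨z.depth, w, z, heq, hwT, hwF, hzT, hzF, rfl⟩
  obtain ⟨w0, z0, heq0, hw0T, hw0F, hz0T, hz0F, hd0⟩ := Nat.sInf_mem hne
  have hmin : P1 z0 := by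
    intro v z'' hvz hvT hz''T hz''F
    cases v with
    | tru => rfl
    | fls => exact absurd hvT (by simp)
    | node v1 b v2 =>
        exfalso
        have heq' : oF S C = oT (oT w0 (ETree.node v1 b v2)) z'' := by
          rw [oT_assoc, ← hvz, ← heq0]
        have hmem : z''.depth ∈ Sset := by
          refine ⟨oT w0 (ETree.node v1 b v2), z'', heq', ?_, ?_, hz''T, hz''F, rfl⟩
          · exact hasTru_subst.2 (Or.inl ⟨hw0T, hvT⟩)
          · exact hasFls_subst.2 (Or.inr ⟨hw0F, trivial⟩)
        have hle := Nat.sInf_le hmem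
        have hlt : z''.depth < z0.depth := by
          rw [hvz]
          exact depth_lt_subst_left hvT
        omega
  rcases mixbranch hz0T hz0F hCT hCF hmin hC2 w0 S heq0.symm with ⟨v, hwv, hiv⟩ | ⟨u, hSu, hju⟩
  · have hCoT := hiv hSF
    have e1 : oF S C = S.subst z0 C := by
      rw [heq0, hwv, hCoT]
      show (S.subst .tru v).subst z0 .fls = S.subst z0 (v.subst z0 .fls)
      rw [subst_subst]; rfl
    have e2 : oF S C = S.subst .tru C := rfl
    have htz := (subst_cancel (e2.symm.trans e1)).1 hST
    rw [← htz] at hz0F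
    exact absurd hz0F (by simp)
  · have hz0e := hju hw0T
    have e1 : oF S C = w0.subst z0 C := by
      rw [hSu]
      show (w0.subst u .fls).subst .tru C = w0.subst z0 C
      rw [subst_subst, hz0e]; rfl
    have e2 : oF S C = w0.subst z0 .fls := heq0
    have hcf := (subst_cancel (e2.symm.trans e1)).2 hw0F
    rw [← hcf] at hCT
    exact absurd hCT (by simp)

/-- Uniqueness of top-level `T`-part/`*`-part splitting. -/
lemma g3 {x1 x2 : ETree A} (h1T : x1.hasTru) (h1F : x1.hasFls) (h2T : x2.hasTru)
    (h2F : x2.hasFls) (p31 : P3 x1) (p32 : P3 x2) :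
    ∀ a1 a2 : ETree A, ¬ a1.hasFls → ¬ a2.hasFls → oT a1 x1 = oT a2 x2 →
      a1 = a2 ∧ x1 = x2 := by
  intro a1
  induction a1 with
  | tru =>
      intro a2 hf1 hf2 h
      simp only [oT_tru'] at h
      have ha2 := p31 a2 x2 h hf2 h2T h2F
      subst ha2
      simp only [oT_tru'] at h
      exact ⟨rfl, h⟩
  | fls => intro a2 hf1 _ _; exact absurd trivial hf1
  | node l a r ihl ihr =>
      intro a2 hf1 hf2 h
      cases a2 with
      | tru =>
          simp only [oT_tru'] at h
          have := p32 (ETree.node l a r) x1 h.symm hf1 h1T h1F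
          simp at this
      | fls => exact absurd trivial hf2
      | node l2 b r2 =>
          simp only [oT, subst_node, ETree.node.injEq] at h
          obtain ⟨e1, hab, e2⟩ := h
          subst hab
          simp only [hasFls_node] at hf1 hf2
          push_neg at hf1 hf2
          obtain ⟨hl, hx⟩ := ihl l2 hf1.1 hf2.1 e1
          obtain ⟨hr, -⟩ := ihr r2 hf1.2 hf2.2 e2
          exact ⟨by rw [hl, hr], hx⟩

end SNFInj
namespace SNFInj

variable {A : Type}

/-! ### Grammar-level lemmas -/

def ssize : STerm A → ℕ
  | .atom _ => 1
  | .tru => 1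
  | .fls => 1
  | .neg p => ssize p + 1
  | .and p q => ssize p + ssize q + 1
  | .or p q => ssize p + ssize q + 1

lemma ssize_pos (s : STerm A) : 1 ≤ ssize s := by
  cases s <;> simp [ssize]

lemma se_and (p q : STerm A) : se (STerm.and p q) = oT (se p) (se q) := rfl
lemma se_or (p q : STerm A) : se (STerm.or p q) = oF (se p) (se q) := rfl

lemma se_Tor {p : STerm A} (q : STerm A) (a : A) (h : ¬ (se p).hasFls) :
    se (STerm.or (STerm.and (STerm.atom a) p) q) = ETree.node (se p) a (se q) := by
  show ETree.node ((se p).subst .tru (se q)) a (se q) = ETree.node (se p) a (se q)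
  rw [subst_congr_right h ETree.tru (se q) ETree.fls, subst_id]

lemma se_ellneg {p : STerm A} (q : STerm A) (a : A) (h : ¬ (se p).hasFls) :
    se (STerm.or (STerm.and (STerm.neg (STerm.atom a)) p) q) =
      ETree.node (se q) a (se p) := by
  show ETree.node (se q) a ((se p).subst .tru (se q)) = ETree.node (se q) a (se p)
  rw [subst_congr_right h ETree.tru (se q) ETree.fls, subst_id]

lemma se_For {p : STerm A} (q : STerm A) (a : A) (h : ¬ (se p).hasTru) :
    se (STerm.and (STerm.or (STerm.atom a) p) q) = ETree.node (se q) a (se p) := by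
  show ETree.node (se q) a ((se p).subst (se q) .fls) = ETree.node (se q) a (se p)
  rw [subst_congr_left h (se q) ETree.tru ETree.fls, subst_id]

lemma Tall {t : STerm A} (h : IsST_T t) : ¬ (se t).hasFls := by
  induction h with
  | tru => simp [se]
  | or a hp hq ihp ihq =>
      rw [se_Tor _ _ ihp]
      simp [ihp, ihq]

lemma Fall {t : STerm A} (h : IsST_F t) : ¬ (se t).hasTru := by
  induction h with
  | fls => simp [se]
  | and a hp hq ihp ihq =>
      rw [se_For _ _ ihp]
      simp [ihp, ihq]

lemma Thas {t : STerm A} (h : IsST_T t) : (se t).hasTru :=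
  (leafex _).resolve_right (Tall h)

lemma Fhas {t : STerm A} (h : IsST_F t) : (se t).hasFls :=
  (leafex _).resolve_left (Fall h)

lemma Tinj : ∀ {t1 t2 : STerm A}, IsST_T t1 → IsST_T t2 → se t1 = se t2 → t1 = t2 := by
  intro t1 t2 h1
  induction h1 generalizing t2 with
  | tru =>
      intro h2 he
      cases h2 with
      | tru => rfl
      | or a hp hq => rw [se_Tor _ _ (Tall hp)] at he; exact absurd he (by simp [se])
  | or a hp hq ihp ihq =>
      intro h2 he
      cases h2 with
      | tru => rw [se_Tor _ _ (Tall hp)] at he; exact absurd he (by simp [se])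
      | or a' hp' hq' =>
          rw [se_Tor _ _ (Tall hp), se_Tor _ _ (Tall hp')] at he
          simp only [ETree.node.injEq] at he
          rw [ihp hp' he.1, he.2.1, ihq hq' he.2.2]

lemma Finj : ∀ {t1 t2 : STerm A}, IsST_F t1 → IsST_F t2 → se t1 = se t2 → t1 = t2 := by
  intro t1 t2 h1
  induction h1 generalizing t2 with
  | fls =>
      intro h2 he
      cases h2 with
      | fls => rfl
      | and a hp hq => rw [se_For _ _ (Fall hp)] at he; exact absurd he (by simp [se])
  | and a hp hq ihp ihq =>
      intro h2 he
      cases h2 with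
      | fls => rw [se_For _ _ (Fall hp)] at he; exact absurd he (by simp [se])
      | and a' hp' hq' =>
          rw [se_For _ _ (Fall hp), se_For _ _ (Fall hp')] at he
          simp only [ETree.node.injEq] at he
          rw [ihp hp' he.2.2, he.2.1, ihq hq' he.1]

def Cfacts (x : ETree A) : Prop := x.hasTru ∧ x.hasFls ∧ P2 x ∧ P3 x ∧ P4 x
def Dfacts (x : ETree A) : Prop := x.hasTru ∧ x.hasFls ∧ P1 x ∧ P3 x ∧ P4 x

lemma ell_facts {s : STerm A} (h : IsST_L s) : Cfacts (se s) ∧ Dfacts (se s) := by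
  cases h with
  | @pos a p q hp hq =>
      rw [se_Tor _ _ (Tall hp)]
      have hsh : EllShape (se p) (se q) := Or.inl ⟨Tall hp, Fall hq⟩
      have hT : (ETree.node (se p) a (se q)).hasTru := Or.inl (Thas hp)
      have hF : (ETree.node (se p) a (se q)).hasFls := Or.inr (Fhas hq)
      exact ⟨⟨hT, hF, P2_ell hsh, P3_ell hsh, P4_ell hsh⟩,
             ⟨hT, hF, P1_ell hsh, P3_ell hsh, P4_ell hsh⟩⟩
  | @neg a p q hp hq =>
      rw [se_ellneg _ _ (Tall hp)]
      have hsh : EllShape (se q) (se p) := Or.inr ⟨Fall hq, Tall hp⟩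
      have hT : (ETree.node (se q) a (se p)).hasTru := Or.inr (Thas hp)
      have hF : (ETree.node (se q) a (se p)).hasFls := Or.inl (Fhas hq)
      exact ⟨⟨hT, hF, P2_ell hsh, P3_ell hsh, P4_ell hsh⟩,
             ⟨hT, hF, P1_ell hsh, P3_ell hsh, P4_ell hsh⟩⟩

theorem prim : ∀ n : ℕ, ∀ s : STerm A, ssize s ≤ n →
    (IsST_C s → Cfacts (se s)) ∧ (IsST_D s → Dfacts (se s)) := by
  intro n
  induction n with
  | zero =>
      intro s hs
      exact absurd hs (by have := ssize_pos s; omega)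
  | succ n ih =>
      intro s hs
      constructor
      · intro hC
        cases hC with
        | ell hl => exact (ell_facts hl).1
        | @and p q hp hq =>
            have he : ssize (STerm.and p q) = ssize p + ssize q + 1 := rfl
            rw [he] at hs
            have hp1 := ssize_pos p
            have hq1 := ssize_pos q
            have hps : ssize p ≤ n := by omega
            have hqs : ssize q ≤ n := by omega
            have hSf : (se p).hasTru ∧ (se p).hasFls ∧ P3 (se p) ∧ P4 (se p) := by
              cases hp with
              | c hc =>
                  obtain ⟨a1, a2, _, a4, a5⟩ := (ih p hps).1 hc
                  exact ⟨a1, a2, a4, a5⟩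
              | d hd =>
                  obtain ⟨a1, a2, _, a4, a5⟩ := (ih p hps).2 hd
                  exact ⟨a1, a2, a4, a5⟩
            obtain ⟨hST, hSF, hS3, hS4⟩ := hSf
            obtain ⟨hDT, hDF, hD1, hD3, hD4⟩ := (ih q hqs).2 hq
            have hXT : (se (STerm.and p q)).hasTru := by
              rw [se_and]; exact hasTru_subst.2 (Or.inl ⟨hST, hDT⟩)
            have hXF : (se (STerm.and p q)).hasFls := by
              rw [se_and]; exact hasFls_subst.2 (Or.inl ⟨hST, hDF⟩)
            have hP3 : P3 (se (STerm.and p q)) := by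
              intro w z hee hwF hzT hzF
              rw [se_and] at hee
              obtain ⟨v, hv, hiv⟩ := master hDT hDF hD1 (se p) w z hee hzT hzF
              have hwT : w.hasTru := (leafex w).resolve_right hwF
              have hz := hiv hwT
              have hvT : v.hasTru := by
                rcases hasTru_subst.1 (show (oT v (se q)).hasTru from hz ▸ hzT)
                  with ⟨h1, _⟩ | ⟨_, h2⟩
                · exact h1
                · exact absurd h2 (by simp)
              have hvF : v.hasFls := by
                rcases hasFls_subst.1 (show (oT w v).hasFls from hv ▸ hSF)
                  with ⟨_, h2⟩ | ⟨h1, _⟩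
                · exact h2
                · exact absurd h1 hwF
              exact hS3 w v hv hwF hvT hvF
            have hP4 : P4 (se (STerm.and p q)) := by
              intro w z hee hwT hzT hzF
              rw [se_and] at hee
              obtain ⟨v, hv, hiv⟩ := masterx hDT hDF hD1 hD4 (se p) w z hee hwT hzT hzF
              have hwF : w.hasFls := (leafex w).resolve_left hwT
              have hz := hiv hwF
              have hvT : v.hasTru := by
                rcases hasTru_subst.1 (show (oF w v).hasTru from hv ▸ hST)
                  with ⟨h1, _⟩ | ⟨_, h2⟩
                · exact absurd h1 hwT
                · exact h2
              have hvF : v.hasFls := by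
                rcases hasFls_subst.1 (show (oF w v).hasFls from hv ▸ hSF)
                  with ⟨_, h2⟩ | ⟨_, h2⟩
                · exact absurd h2 (by simp)
                · exact h2
              exact hS4 w v hv hwT hvT hvF
            have hP2 : P2 (se (STerm.and p q)) := by
              intro w z hee hwF hzT hzF
              by_cases hwT : w.hasTru
              · rw [se_and] at hee
                exact (nocdd hST hSF hDT hDF hD1 w z hee hwT hwF hzT hzF).elim
              · exact hP4 w z hee hwT hzT hzF
            exact ⟨hXT, hXF, hP2, hP3, hP4⟩
      · intro hD
        cases hD with
        | ell hl => exact (ell_facts hl).2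
        | @or p q hp hq =>
            have he : ssize (STerm.or p q) = ssize p + ssize q + 1 := rfl
            rw [he] at hs
            have hp1 := ssize_pos p
            have hq1 := ssize_pos q
            have hps : ssize p ≤ n := by omega
            have hqs : ssize q ≤ n := by omega
            have hSf : (se p).hasTru ∧ (se p).hasFls ∧ P3 (se p) ∧ P4 (se p) := by
              cases hp with
              | c hc =>
                  obtain ⟨a1, a2, _, a4, a5⟩ := (ih p hps).1 hc
                  exact ⟨a1, a2, a4, a5⟩
              | d hd =>
                  obtain ⟨a1, a2, _, a4, a5⟩ := (ih p hps).2 hd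
                  exact ⟨a1, a2, a4, a5⟩
            obtain ⟨hST, hSF, hS3, hS4⟩ := hSf
            obtain ⟨hCT, hCF, hC2, hC3, hC4⟩ := (ih q hqs).1 hq
            have hXT : (se (STerm.or p q)).hasTru := by
              rw [se_or]; exact hasTru_subst.2 (Or.inl ⟨hST, trivial⟩)
            have hXF : (se (STerm.or p q)).hasFls := by
              rw [se_or]; exact hasFls_subst.2 (Or.inr ⟨hSF, hCF⟩)
            have hP4 : P4 (se (STerm.or p q)) := by
              intro w z hee hwT hzT hzF
              rw [se_or] at hee
              obtain ⟨v, hv, hiv⟩ := masterf hCT hCF hC2 (se p) w z hee hzT hzF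
              have hwF : w.hasFls := (leafex w).resolve_left hwT
              have hz := hiv hwF
              have hvF : v.hasFls := by
                rcases hasFls_subst.1 (show (oF v (se q)).hasFls from hz ▸ hzF)
                  with ⟨_, h2⟩ | ⟨h1, _⟩
                · exact absurd h2 (by simp)
                · exact h1
              have hvT : v.hasTru := by
                rcases hasTru_subst.1 (show (oF w v).hasTru from hv ▸ hST)
                  with ⟨h1, _⟩ | ⟨_, h2⟩
                · exact absurd h1 hwT
                · exact h2
              exact hS4 w v hv hwT hvT hvF
            have hP3 : P3 (se (STerm.or p q)) := by
              intro w z hee hwF hzT hzF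
              rw [se_or] at hee
              obtain ⟨v, hv, hiv⟩ := masterxd hCT hCF hC2 hC3 (se p) w z hee hwF hzT hzF
              have hwT : w.hasTru := (leafex w).resolve_right hwF
              have hz := hiv hwT
              have hvT : v.hasTru := by
                rcases hasTru_subst.1 (show (oT w v).hasTru from hv ▸ hST)
                  with ⟨_, h2⟩ | ⟨_, h2⟩
                · exact h2
                · exact absurd h2 (by simp)
              have hvF : v.hasFls := by
                rcases hasFls_subst.1 (show (oT w v).hasFls from hv ▸ hSF)
                  with ⟨_, h2⟩ | ⟨h1, _⟩
                · exact h2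
                · exact absurd h1 hwF
              exact hS3 w v hv hwF hvT hvF
            have hP1 : P1 (se (STerm.or p q)) := by
              intro w z hee hwT hzT hzF
              by_cases hwF : w.hasFls
              · rw [se_or] at hee
                exact (noccd hST hSF hCT hCF hC2 w z hee hwT hwF hzT hzF).elim
              · exact hP3 w z hee hwF hzT hzF
            exact ⟨hXT, hXF, hP1, hP3, hP4⟩

end SNFInj
namespace SNFInj

variable {A : Type}

lemma star_cases {s : STerm A} (h : IsST_Star s) :
    IsST_L s ∨ (∃ p q, s = .and p q ∧ IsST_Star p ∧ IsST_D q) ∨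
      (∃ p q, s = .or p q ∧ IsST_Star p ∧ IsST_C q) := by
  cases h with
  | c hc =>
      cases hc with
      | ell hl => exact Or.inl hl
      | @and p q hp hq => exact Or.inr (Or.inl ⟨p, q, rfl, hp, hq⟩)
  | d hd =>
      cases hd with
      | ell hl => exact Or.inl hl
      | @or p q hp hq => exact Or.inr (Or.inr ⟨p, q, rfl, hp, hq⟩)

lemma star_facts {s : STerm A} (h : IsST_Star s) :
    (se s).hasTru ∧ (se s).hasFls ∧ P3 (se s) ∧ P4 (se s) := by
  cases h with
  | c hc =>
      obtain ⟨a1, a2, _, a4, a5⟩ := (prim (ssize s) s le_rfl).1 hc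
      exact ⟨a1, a2, a4, a5⟩
  | d hd =>
      obtain ⟨a1, a2, _, a4, a5⟩ := (prim (ssize s) s le_rfl).2 hd
      exact ⟨a1, a2, a4, a5⟩

lemma ellinj {s1 s2 : STerm A} (h1 : IsST_L s1) (h2 : IsST_L s2) (he : se s1 = se s2) :
    s1 = s2 := by
  cases h1 with
  | @pos a p q hp hq =>
      rw [se_Tor _ _ (Tall hp)] at he
      cases h2 with
      | @pos a' p' q' hp' hq' =>
          rw [se_Tor _ _ (Tall hp')] at he
          simp only [ETree.node.injEq] at he
          rw [Tinj hp hp' he.1, he.2.1, Finj hq hq' he.2.2]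
      | @neg a' p' q' hp' hq' =>
          rw [se_ellneg _ _ (Tall hp')] at he
          simp only [ETree.node.injEq] at he
          exact absurd (he.1 ▸ Thas hp) (Fall hq')
  | @neg a p q hp hq =>
      rw [se_ellneg _ _ (Tall hp)] at he
      cases h2 with
      | @pos a' p' q' hp' hq' =>
          rw [se_Tor _ _ (Tall hp')] at he
          simp only [ETree.node.injEq] at he
          exact absurd (he.1.symm ▸ Thas hp') (Fall hq)
      | @neg a' p' q' hp' hq' =>
          rw [se_ellneg _ _ (Tall hp')] at he
          simp only [ETree.node.injEq] at he
          rw [Finj hq hq' he.1, he.2.1, Tinj hp hp' he.2.2]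

theorem starinj : ∀ n : ℕ, ∀ s1 s2 : STerm A, ssize s1 ≤ n → IsST_Star s1 →
    IsST_Star s2 → se s1 = se s2 → s1 = s2 := by
  intro n
  induction n with
  | zero =>
      intro s1 s2 hs _ _ _
      exact absurd hs (by have := ssize_pos s1; omega)
  | succ n ih =>
      intro s1 s2 hs h1 h2 he
      rcases star_cases h1 with hl1 | ⟨p1, q1, rfl, hp1, hq1⟩ | ⟨p1, q1, rfl, hp1, hq1⟩
      · rcases star_cases h2 with hl2 | ⟨p2, q2, rfl, hp2, hq2⟩ | ⟨p2, q2, rfl, hp2, hq2⟩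
        · exact ellinj hl1 hl2 he
        · obtain ⟨hQT, hQF, hQ1, -, -⟩ := (prim (ssize q2) q2 le_rfl).2 hq2
          have hPT := (star_facts hp2).1
          have hPF := (star_facts hp2).2.1
          have hP1 := ((ell_facts hl1).2).2.2.1
          rw [se_and] at he
          have hEq := hP1 (se p2) (se q2) he hPT hQT hQF
          rw [hEq] at hPF
          exact absurd hPF (by simp)
        · obtain ⟨hQT, hQF, hQ2, -, -⟩ := (prim (ssize q2) q2 le_rfl).1 hq2
          have hPT := (star_facts hp2).1
          have hPF := (star_facts hp2).2.1
          have hP2' := ((ell_facts hl1).1).2.2.1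
          rw [se_or] at he
          have hEq := hP2' (se p2) (se q2) he hPF hQT hQF
          rw [hEq] at hPT
          exact absurd hPT (by simp)
      · rcases star_cases h2 with hl2 | ⟨p2, q2, rfl, hp2, hq2⟩ | ⟨p2, q2, rfl, hp2, hq2⟩
        · obtain ⟨hQT, hQF, hQ1, -, -⟩ := (prim (ssize q1) q1 le_rfl).2 hq1
          have hPT := (star_facts hp1).1
          have hPF := (star_facts hp1).2.1
          have hP1 := ((ell_facts hl2).2).2.2.1
          rw [se_and] at he
          have hEq := hP1 (se p1) (se q1) he.symm hPT hQT hQF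
          rw [hEq] at hPF
          exact absurd hPF (by simp)
        · obtain ⟨hQ1T, hQ1F, hQ11, -, -⟩ := (prim (ssize q1) q1 le_rfl).2 hq1
          obtain ⟨hQ2T, hQ2F, hQ21, -, -⟩ := (prim (ssize q2) q2 le_rfl).2 hq2
          rw [se_and, se_and] at he
          obtain ⟨hSe, hImp⟩ := g1 hQ1T hQ1F hQ2T hQ2F hQ11 hQ21 (se p1) (se p2) he
          have hq := hImp (star_facts hp1).1
          have hsz : ssize (STerm.and p1 q1) = ssize p1 + ssize q1 + 1 := rfl
          rw [hsz] at hs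
          have e1 := ssize_pos p1
          have e2 := ssize_pos q1
          rw [ih p1 p2 (by omega) hp1 hp2 hSe,
              ih q1 q2 (by omega) (IsST_Star.d hq1) (IsST_Star.d hq2) hq]
        · obtain ⟨hQ1T, hQ1F, -, -, -⟩ := (prim (ssize q1) q1 le_rfl).2 hq1
          obtain ⟨hQ2T, hQ2F, hQ22, -, -⟩ := (prim (ssize q2) q2 le_rfl).1 hq2
          rw [se_and, se_or] at he
          exact (noccd (star_facts hp2).1 (star_facts hp2).2.1 hQ2T hQ2F hQ22
            (se p1) (se q1) he.symm (star_facts hp1).1 (star_facts hp1).2.1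
            hQ1T hQ1F).elim
      · rcases star_cases h2 with hl2 | ⟨p2, q2, rfl, hp2, hq2⟩ | ⟨p2, q2, rfl, hp2, hq2⟩
        · obtain ⟨hQT, hQF, hQ2, -, -⟩ := (prim (ssize q1) q1 le_rfl).1 hq1
          have hPT := (star_facts hp1).1
          have hPF := (star_facts hp1).2.1
          have hP2' := ((ell_facts hl2).1).2.2.1
          rw [se_or] at he
          have hEq := hP2' (se p1) (se q1) he.symm hPF hQT hQF
          rw [hEq] at hPT
          exact absurd hPT (by simp)
        · obtain ⟨hQ1T, hQ1F, -, -, -⟩ := (prim (ssize q1) q1 le_rfl).1 hq1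
          obtain ⟨hQ2T, hQ2F, hQ21, -, -⟩ := (prim (ssize q2) q2 le_rfl).2 hq2
          rw [se_or, se_and] at he
          exact (nocdd (star_facts hp2).1 (star_facts hp2).2.1 hQ2T hQ2F hQ21
            (se p1) (se q1) he.symm (star_facts hp1).1 (star_facts hp1).2.1
            hQ1T hQ1F).elim
        · obtain ⟨hQ1T, hQ1F, hQ12, -, -⟩ := (prim (ssize q1) q1 le_rfl).1 hq1
          obtain ⟨hQ2T, hQ2F, hQ22, -, -⟩ := (prim (ssize q2) q2 le_rfl).1 hq2
          rw [se_or, se_or] at he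
          obtain ⟨hSe, hImp⟩ := g2 hQ1T hQ1F hQ2T hQ2F hQ12 hQ22 (se p1) (se p2) he
          have hq := hImp (star_facts hp1).2.1
          have hsz : ssize (STerm.or p1 q1) = ssize p1 + ssize q1 + 1 := rfl
          rw [hsz] at hs
          have e1 := ssize_pos p1
          have e2 := ssize_pos q1
          rw [ih p1 p2 (by omega) hp1 hp2 hSe,
              ih q1 q2 (by omega) (IsST_Star.c hq1) (IsST_Star.c hq2) hq]

end SNFInj

open SNFInj

/-- se is injective on SCL Normal Forms. -/
theorem se_injective_on_snf (A : Type) [Countable A] (P Q : STerm A)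
    (hP : IsSNF P) (hQ : IsSNF Q) (h : se P = se Q) : P = Q := by
  cases hP with
  | t ht1 =>
      cases hQ with
      | t ht2 => exact Tinj ht1 ht2 h
      | f hf2 => exact absurd (h ▸ Thas ht1) (Fall hf2)
      | @ts t2 s2 ht2 hs2 =>
          have hF : (se (STerm.and t2 s2)).hasFls := by
            rw [se_and]
            exact hasFls_subst.2 (Or.inl ⟨Thas ht2, (star_facts hs2).2.1⟩)
          rw [← h] at hF
          exact absurd hF (Tall ht1)
  | f hf1 =>
      cases hQ with
      | t ht2 => exact absurd (h.symm ▸ Thas ht2) (Fall hf1)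
      | f hf2 => exact Finj hf1 hf2 h
      | @ts t2 s2 ht2 hs2 =>
          have hT : (se (STerm.and t2 s2)).hasTru := by
            rw [se_and]
            exact hasTru_subst.2 (Or.inl ⟨Thas ht2, (star_facts hs2).1⟩)
          rw [← h] at hT
          exact absurd hT (Fall hf1)
  | @ts t1 s1 ht1 hs1 =>
      cases hQ with
      | t ht2 =>
          have hF : (se (STerm.and t1 s1)).hasFls := by
            rw [se_and]
            exact hasFls_subst.2 (Or.inl ⟨Thas ht1, (star_facts hs1).2.1⟩)
          rw [h] at hF
          exact absurd hF (Tall ht2)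
      | f hf2 =>
          have hT : (se (STerm.and t1 s1)).hasTru := by
            rw [se_and]
            exact hasTru_subst.2 (Or.inl ⟨Thas ht1, (star_facts hs1).1⟩)
          rw [h] at hT
          exact absurd hT (Fall hf2)
      | @ts t2 s2 ht2 hs2 =>
          rw [se_and, se_and] at h
          obtain ⟨F1T, F1F, F13, -⟩ := star_facts hs1
          obtain ⟨F2T, F2F, F23, -⟩ := star_facts hs2
          obtain ⟨ha, hx⟩ := g3 F1T F1F F2T F2F F13 F23 (se t1) (se t2)
            (Tall ht1) (Tall ht2) h
          rw [Tinj ht1 ht2 ha, starinj (ssize s1) s1 s2 le_rfl hs1 hs2 hx]
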